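/- Suppose G0 and G1 are Borel probability measures on ℝ with mean zero and variance bounded by V, and let σ > 0. Then ∫∫ m_{G1,σ}(x)² φ_σ(x−θ) dx dG0(θ) ≤ 6V + 4σ². -/

import Mathlib

open MeasureTheory Real Set

/-- The `N(0, σ²)` density `φ_σ(t) = (2πσ²)^{-1/2} exp(-t²/(2σ²))`. -/
noncomputable def gaussDens (σ t : ℝ) : ℝ :=
  (Real.sqrt (2 * Real.pi * σ ^ 2))⁻¹ * Real.exp (-t ^ 2 / (2 * σ ^ 2))

/-- Marginal density `f_{G,σ}(x) = ∫ φ_σ(x-θ) dG(θ)`. -/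
noncomputable def margDens (G : Measure ℝ) (σ x : ℝ) : ℝ :=
  ∫ θ, gaussDens σ (x - θ) ∂G

/-- Posterior mean `m_{G,σ}(x) = (∫ θ φ_σ(x-θ) dG(θ)) / f_{G,σ}(x)`. -/
noncomputable def postMean (G : Measure ℝ) (σ x : ℝ) : ℝ :=
  (∫ θ, θ * gaussDens σ (x - θ) ∂G) / margDens G σ x

/-- Posterior survival probability `S_{G,σ}(s,x) = (∫_{(s,∞)} φ_σ(x-θ) dG(θ)) / f_{G,σ}(x)`. -/
noncomputable def postSurv (G : Measure ℝ) (σ s x : ℝ) : ℝ :=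
  (∫ θ in Set.Ioi s, gaussDens σ (x - θ)  ∂G) / margDens G σ x

/-- `G` has mean zero and variance bounded by `V`. -/
def MeanZeroVarLe (G : Measure ℝ) (V : ℝ) : Prop :=
  Integrable (fun θ : ℝ => θ) G ∧ Integrable (fun θ : ℝ => θ ^ 2) G ∧
    (∫ θ, θ ∂G) = 0 ∧ (∫ θ, θ ^ 2 ∂G) ≤ V

/-- The tail condition `max(1 - G((-∞,s]), G((-∞,-s])) ≤ C s^{-k}` for all `s > 0`. -/
def TailCond (G : Measure ℝ) (C k : ℝ) : Prop :=
  ∀ s : ℝ, 0 < s →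
    max (1 - (G (Set.Iic s)).toReal) ((G (Set.Iic (-s))).toReal) ≤ C * s ^ (-k)

/-- Complementary standard Gaussian CDF `Φ̄(x) = ∫_x^∞ (2π)^{-1/2} exp(-t²/2) dt`. -/
noncomputable def compPhi (x : ℝ) : ℝ :=
  ∫ t in Set.Ioi x, (Real.sqrt (2 * Real.pi))⁻¹ * Real.exp (-t ^ 2 / 2)

/-! ### Auxiliary lemmas -/

namespace Stmt2Aux

lemma normConst_pos {σ : ℝ} (hσ : 0 < σ) : 0 < (Real.sqrt (2 * Real.pi * σ ^ 2))⁻¹ := by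
  have : 0 < 2 * Real.pi * σ ^ 2 := by positivity
  positivity

lemma gaussDens_pos {σ : ℝ} (hσ : 0 < σ) (t : ℝ) : 0 < gaussDens σ t := by
  have h := normConst_pos hσ
  unfold gaussDens
  positivity

lemma gaussDens_le {σ : ℝ} (hσ : 0 < σ) (t : ℝ) :
    gaussDens σ t ≤ (Real.sqrt (2 * Real.pi * σ ^ 2))⁻¹ := by
  unfold gaussDens
  nth_rewrite 2 [← mul_one ((Real.sqrt (2 * Real.pi * σ ^ 2))⁻¹)]
  refine mul_le_mul_of_nonneg_left ?_ (normConst_pos hσ).le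
  rw [Real.exp_le_one_iff]
  apply div_nonpos_of_nonpos_of_nonneg
  · simpa using sq_nonneg t
  · positivity

lemma gaussDens_cont {σ : ℝ} : Continuous (gaussDens σ) := by
  unfold gaussDens
  fun_prop

lemma exp_div_anti {σ : ℝ} (hσ : 0 < σ) {A B : ℝ} (h : A ≤ B) :
    Real.exp (-B / (2 * σ ^ 2)) ≤ Real.exp (-A / (2 * σ ^ 2)) := by
  apply Real.exp_le_exp.2
  have h2 : (0 : ℝ) < 2 * σ ^ 2 := by positivity
  rw [div_le_div_iff₀ h2 h2]
  nlinarith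

/-- Key pointwise bound: `m_{G,σ}(x)² ≤ 4x² + 2V` for mean-zero `G` with variance `≤ V`. -/
lemma postMean_sq_le (V σ : ℝ) (hσ : 0 < σ) (G1 : Measure ℝ) [IsProbabilityMeasure G1]
    (hG1 : MeanZeroVarLe G1 V) (x : ℝ) :
    (postMean G1 σ x) ^ 2 ≤ 4 * x ^ 2 + 2 * V := by
  obtain ⟨hInt1, hInt2, hMean, hVar⟩ := hG1
  set C : ℝ := (Real.sqrt (2 * Real.pi * σ ^ 2))⁻¹ with hC
  have hCpos : 0 < C := normConst_pos hσ
  have hφpos : ∀ θ : ℝ, 0 < gaussDens σ (x - θ) := fun θ => gaussDens_pos hσ _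
  have hφle : ∀ θ : ℝ, gaussDens σ (x - θ) ≤ C := fun θ => gaussDens_le hσ _
  have hφcont : Continuous (fun θ : ℝ => gaussDens σ (x - θ)) :=
    gaussDens_cont.comp (continuous_const.sub continuous_id)
  -- integrability facts
  have hIφ : Integrable (fun θ : ℝ => gaussDens σ (x - θ)) G1 := by
    refine Integrable.mono' (integrable_const C) (hφcont.aestronglyMeasurable)
      (ae_of_all _ fun θ => ?_)
    rw [Real.norm_eq_abs, abs_of_pos (hφpos θ)]; exact hφle θ
  have hI1 : Integrable (fun θ : ℝ => θ * gaussDens σ (x - θ)) G1 := by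
    refine Integrable.mono' (hInt1.abs.const_mul C)
      ((continuous_id.mul hφcont).aestronglyMeasurable) (ae_of_all _ fun θ => ?_)
    rw [Real.norm_eq_abs, abs_mul, abs_of_pos (hφpos θ)]
    calc |θ| * gaussDens σ (x - θ) ≤ |θ| * C :=
          mul_le_mul_of_nonneg_left (hφle θ) (abs_nonneg θ)
      _ = C * |θ| := mul_comm _ _
  have hI2 : Integrable (fun θ : ℝ => θ ^ 2 * gaussDens σ (x - θ)) G1 := by
    refine Integrable.mono' (hInt2.const_mul C)
      (((continuous_pow 2).mul hφcont).aestronglyMeasurable) (ae_of_all _ fun θ => ?_)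
    rw [Real.norm_eq_abs, abs_mul, abs_of_pos (hφpos θ), abs_of_nonneg (sq_nonneg θ)]
    calc θ ^ 2 * gaussDens σ (x - θ) ≤ θ ^ 2 * C :=
          mul_le_mul_of_nonneg_left (hφle θ) (sq_nonneg θ)
      _ = C * θ ^ 2 := mul_comm _ _
  have hIYplain : Integrable (fun θ : ℝ => (x - θ) ^ 2) G1 := by
    have heq : (fun θ : ℝ => (x - θ) ^ 2)
        = fun θ : ℝ => (x ^ 2 + (-(2 * x)) * θ) + θ ^ 2 := by
      funext θ; ring
    rw [heq]
    exact ((integrable_const (x ^ 2)).add (hInt1.const_mul _)).add hInt2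
  have hIY : Integrable (fun θ : ℝ => (x - θ) ^ 2 * gaussDens σ (x - θ)) G1 := by
    refine Integrable.mono' (hIYplain.const_mul C)
      ((((continuous_const.sub continuous_id).pow 2).mul hφcont).aestronglyMeasurable)
      (ae_of_all _ fun θ => ?_)
    rw [Real.norm_eq_abs, abs_mul, abs_of_pos (hφpos θ), abs_of_nonneg (sq_nonneg _)]
    calc (x - θ) ^ 2 * gaussDens σ (x - θ) ≤ (x - θ) ^ 2 * C :=
          mul_le_mul_of_nonneg_left (hφle θ) (sq_nonneg _)
      _ = C * (x - θ) ^ 2 := mul_comm _ _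
  set Z : ℝ := ∫ θ, gaussDens σ (x - θ) ∂G1 with hZ
  set N1 : ℝ := ∫ θ, θ * gaussDens σ (x - θ) ∂G1 with hN1
  set N2 : ℝ := ∫ θ, θ ^ 2 * gaussDens σ (x - θ) ∂G1 with hN2
  set NY : ℝ := ∫ θ, (x - θ) ^ 2 * gaussDens σ (x - θ) ∂G1 with hNY
  have hZpos : 0 < Z := by
    rw [hZ]
    refine (integral_pos_iff_support_of_nonneg (fun θ => (hφpos θ).le) hIφ).2 ?_
    have hsupp : (Function.support fun θ : ℝ => gaussDens σ (x - θ)) = Set.univ :=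
      Set.eq_univ_of_forall fun θ => (hφpos θ).ne'
    rw [hsupp]
    simp
  -- Cauchy-Schwarz: N1² ≤ N2 * Z
  have hCS : N1 ^ 2 ≤ N2 * Z := by
    have hq : ∀ t : ℝ, 0 ≤ N2 * (t * t) + (-(2 * N1)) * t + Z := by
      intro t
      have e1 : ∫ θ, (t ^ 2 * (θ ^ 2 * gaussDens σ (x - θ))
              + ((-(2 * t)) * (θ * gaussDens σ (x - θ)) + gaussDens σ (x - θ))) ∂G1
          = (∫ θ, t ^ 2 * (θ ^ 2 * gaussDens σ (x - θ)) ∂G1)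
            + ∫ θ, ((-(2 * t)) * (θ * gaussDens σ (x - θ)) + gaussDens σ (x - θ)) ∂G1 :=
        integral_add (hI2.const_mul _) ((hI1.const_mul _).add hIφ)
      have e2 : ∫ θ, ((-(2 * t)) * (θ * gaussDens σ (x - θ)) + gaussDens σ (x - θ)) ∂G1
          = (∫ θ, (-(2 * t)) * (θ * gaussDens σ (x - θ)) ∂G1)
            + ∫ θ, gaussDens σ (x - θ) ∂G1 :=
        integral_add (hI1.const_mul _) hIφ
      have e3 : ∫ θ, t ^ 2 * (θ ^ 2 * gaussDens σ (x - θ)) ∂G1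
          = t ^ 2 * ∫ θ, θ ^ 2 * gaussDens σ (x - θ) ∂G1 := integral_const_mul _ _
      have e4 : ∫ θ, (-(2 * t)) * (θ * gaussDens σ (x - θ)) ∂G1
          = (-(2 * t)) * ∫ θ, θ * gaussDens σ (x - θ) ∂G1 := integral_const_mul _ _
      have hval : N2 * (t * t) + (-(2 * N1)) * t + Z
          = ∫ θ, (t ^ 2 * (θ ^ 2 * gaussDens σ (x - θ))
              + ((-(2 * t)) * (θ * gaussDens σ (x - θ)) + gaussDens σ (x - θ))) ∂G1 := by
        rw [e1, e2, e3, e4, ← hN2, ← hN1, ← hZ]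
        ring
      rw [hval]
      refine integral_nonneg fun θ => ?_
      have h1 : 0 ≤ (t * θ - 1) ^ 2 * gaussDens σ (x - θ) :=
        mul_nonneg (sq_nonneg _) (hφpos θ).le
      simp only [Pi.zero_apply]
      nlinarith [h1]
    have hd := discrim_le_zero hq
    rw [discrim] at hd
    nlinarith [hd]
  set V' : ℝ := ∫ θ, θ ^ 2 ∂G1 with hV'
  have hV'nonneg : 0 ≤ V' := integral_nonneg fun θ => sq_nonneg θ
  set A : ℝ := x ^ 2 + V' with hA
  have hAnonneg : 0 ≤ A := by positivity
  have hYint : ∫ θ, (x - θ) ^ 2 ∂G1 = A := by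
    have heq : (fun θ : ℝ => (x - θ) ^ 2)
        = fun θ : ℝ => (x ^ 2 + (-(2 * x)) * θ) + θ ^ 2 := by
      funext θ; ring
    have e1 : ∫ θ, ((x ^ 2 + (-(2 * x)) * θ) + θ ^ 2) ∂G1
        = (∫ θ, (x ^ 2 + (-(2 * x)) * θ) ∂G1) + ∫ θ, θ ^ 2 ∂G1 :=
      integral_add ((integrable_const (x ^ 2)).add (hInt1.const_mul _)) hInt2
    have e2 : ∫ θ, (x ^ 2 + (-(2 * x)) * θ) ∂G1
        = (∫ _θ, x ^ 2 ∂G1) + ∫ θ, (-(2 * x)) * θ ∂G1 :=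
      integral_add (integrable_const (x ^ 2)) (hInt1.const_mul _)
    have e3 : ∫ θ, (-(2 * x)) * θ ∂G1 = (-(2 * x)) * ∫ θ, θ ∂G1 := integral_const_mul _ _
    rw [heq, e1, e2, e3, hMean, ← hV', integral_const]
    simp [hA]
  -- anti-correlation: NY ≤ A * Z
  have hNYle : NY ≤ A * Z := by
    set D : ℝ := C * Real.exp (-A / (2 * σ ^ 2)) with hD
    have hDnn : 0 ≤ D := by positivity
    have pw : ∀ θ : ℝ, (x - θ) ^ 2 * gaussDens σ (x - θ)
        ≤ A * gaussDens σ (x - θ) + D * ((x - θ) ^ 2 - A) := by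
      intro θ
      have hgd : gaussDens σ (x - θ) = C * Real.exp (-(x - θ) ^ 2 / (2 * σ ^ 2)) := rfl
      have hkey : ((x - θ) ^ 2 - A) * (gaussDens σ (x - θ) - D) ≤ 0 := by
        rcases le_total ((x - θ) ^ 2) A with h | h
        · refine mul_nonpos_of_nonpos_of_nonneg (by linarith) ?_
          rw [sub_nonneg, hD, hgd]
          exact mul_le_mul_of_nonneg_left (exp_div_anti hσ h) hCpos.le
        · refine mul_nonpos_of_nonneg_of_nonpos (by linarith) ?_
          rw [sub_nonpos, hD, hgd]
          exact mul_le_mul_of_nonneg_left (exp_div_anti hσ h) hCpos.le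
      nlinarith [hkey]
    have hRHSint : Integrable (fun θ : ℝ =>
        A * gaussDens σ (x - θ) + D * ((x - θ) ^ 2 - A)) G1 :=
      (hIφ.const_mul A).add ((hIYplain.sub (integrable_const A)).const_mul D)
    calc NY ≤ ∫ θ, (A * gaussDens σ (x - θ) + D * ((x - θ) ^ 2 - A)) ∂G1 :=
          integral_mono hIY hRHSint pw
      _ = A * Z + D * (A - A) := by
          have e1 : ∫ θ, (A * gaussDens σ (x - θ) + D * ((x - θ) ^ 2 - A)) ∂G1
              = (∫ θ, A * gaussDens σ (x - θ) ∂G1) + ∫ θ, D * ((x - θ) ^ 2 - A) ∂G1 :=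
            integral_add (hIφ.const_mul A) ((hIYplain.sub (integrable_const A)).const_mul D)
          have e2 : ∫ θ, A * gaussDens σ (x - θ) ∂G1 = A * ∫ θ, gaussDens σ (x - θ) ∂G1 :=
            integral_const_mul _ _
          have e3 : ∫ θ, D * ((x - θ) ^ 2 - A) ∂G1 = D * ∫ θ, ((x - θ) ^ 2 - A) ∂G1 :=
            integral_const_mul _ _
          have e4 : ∫ θ, ((x - θ) ^ 2 - A) ∂G1
              = (∫ θ, (x - θ) ^ 2 ∂G1) - ∫ _θ, A ∂G1 :=
            integral_sub hIYplain (integrable_const A)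
          rw [e1, e2, e3, e4, hYint, ← hZ, integral_const]
          simp
      _ = A * Z := by ring
  -- second moment expansion
  have hN2eq : N2 = NY + 2 * x * N1 - x ^ 2 * Z := by
    have heq : (fun θ : ℝ => θ ^ 2 * gaussDens σ (x - θ))
        = fun θ : ℝ => ((x - θ) ^ 2 * gaussDens σ (x - θ)
            + (2 * x) * (θ * gaussDens σ (x - θ))) + (-(x ^ 2)) * gaussDens σ (x - θ) := by
      funext θ; ring
    have e1 : ∫ θ, (((x - θ) ^ 2 * gaussDens σ (x - θ)
            + (2 * x) * (θ * gaussDens σ (x - θ))) + (-(x ^ 2)) * gaussDens σ (x - θ)) ∂G1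
        = (∫ θ, ((x - θ) ^ 2 * gaussDens σ (x - θ)
            + (2 * x) * (θ * gaussDens σ (x - θ))) ∂G1)
          + ∫ θ, (-(x ^ 2)) * gaussDens σ (x - θ) ∂G1 :=
      integral_add (hIY.add (hI1.const_mul _)) (hIφ.const_mul _)
    have e2 : ∫ θ, ((x - θ) ^ 2 * gaussDens σ (x - θ)
            + (2 * x) * (θ * gaussDens σ (x - θ))) ∂G1
        = (∫ θ, (x - θ) ^ 2 * gaussDens σ (x - θ) ∂G1)
          + ∫ θ, (2 * x) * (θ * gaussDens σ (x - θ)) ∂G1 :=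
      integral_add hIY (hI1.const_mul _)
    have e3 : ∫ θ, (2 * x) * (θ * gaussDens σ (x - θ)) ∂G1
        = (2 * x) * ∫ θ, θ * gaussDens σ (x - θ) ∂G1 := integral_const_mul _ _
    have e4 : ∫ θ, (-(x ^ 2)) * gaussDens σ (x - θ) ∂G1
        = (-(x ^ 2)) * ∫ θ, gaussDens σ (x - θ) ∂G1 := integral_const_mul _ _
    rw [hN2, heq, e1, e2, e3, e4, ← hNY, ← hN1, ← hZ]
    ring
  -- put everything together
  have hpm : postMean G1 σ x = N1 / Z := by
    simp only [postMean, margDens, hN1, hZ]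
  have hN2le : N2 ≤ (V' + 2 * x * (N1 / Z)) * Z := by
    have hZne : Z ≠ 0 := hZpos.ne'
    have hexp : (V' + 2 * x * (N1 / Z)) * Z = V' * Z + 2 * x * N1 := by
      field_simp
    have hAZ : A * Z = x ^ 2 * Z + V' * Z := by rw [hA]; ring
    linarith [hNYle, hN2eq, hAZ, hexp]
  have hmsq : (N1 / Z) ^ 2 ≤ V' + 2 * x * (N1 / Z) := by
    have h1 : (N1 / Z) ^ 2 * Z ^ 2 = N1 ^ 2 := by
      field_simp
    have h2 : N1 ^ 2 ≤ (V' + 2 * x * (N1 / Z)) * Z ^ 2 := by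
      calc N1 ^ 2 ≤ N2 * Z := hCS
        _ ≤ ((V' + 2 * x * (N1 / Z)) * Z) * Z :=
            mul_le_mul_of_nonneg_right hN2le hZpos.le
        _ = (V' + 2 * x * (N1 / Z)) * Z ^ 2 := by ring
    have hZ2 : 0 < Z ^ 2 := by positivity
    have h3 : (N1 / Z) ^ 2 * Z ^ 2 ≤ (V' + 2 * x * (N1 / Z)) * Z ^ 2 := by
      rw [h1]; exact h2
    exact le_of_mul_le_mul_right h3 hZ2
  rw [hpm]
  nlinarith [hmsq, sq_nonneg (N1 / Z - 2 * x), hVar]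

/-! ### Gaussian moment integrals over `ℝ` -/

lemma integrable_sq_mul_exp {b : ℝ} (hb : 0 < b) :
    Integrable (fun u : ℝ => u ^ 2 * Real.exp (-b * u ^ 2)) := by
  have hdom : Integrable (fun u : ℝ => (2 / b) * Real.exp (-(b / 2) * u ^ 2)) :=
    (integrable_exp_neg_mul_sq (by positivity)).const_mul _
  refine hdom.mono' ?_ (ae_of_all _ fun u => ?_)
  · exact ((continuous_pow 2).mul
      (Real.continuous_exp.comp (continuous_const.mul (continuous_pow 2)))).aestronglyMeasurable
  · rw [Real.norm_eq_abs, abs_of_nonneg (by positivity)]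
    have h1 : u ^ 2 ≤ (2 / b) * Real.exp ((b / 2) * u ^ 2) := by
      have h2 := Real.add_one_le_exp ((b / 2) * u ^ 2)
      have h3 : (b / 2) * u ^ 2 ≤ Real.exp ((b / 2) * u ^ 2) := by linarith
      have hcanc : (2 / b) * ((b / 2) * u ^ 2) = u ^ 2 := by
        field_simp
      calc u ^ 2 = (2 / b) * ((b / 2) * u ^ 2) := hcanc.symm
        _ ≤ (2 / b) * Real.exp ((b / 2) * u ^ 2) :=
            mul_le_mul_of_nonneg_left h3 (by positivity)
    calc u ^ 2 * Real.exp (-b * u ^ 2)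
        ≤ ((2 / b) * Real.exp ((b / 2) * u ^ 2)) * Real.exp (-b * u ^ 2) :=
          mul_le_mul_of_nonneg_right h1 (Real.exp_nonneg _)
      _ = (2 / b) * Real.exp (-(b / 2) * u ^ 2) := by
          rw [mul_assoc, ← Real.exp_add]
          congr 1
          ring

lemma tendsto_mul_exp_atTop {b : ℝ} (hb : 0 < b) :
    Filter.Tendsto (fun u : ℝ => u * Real.exp (-b * u ^ 2)) Filter.atTop (nhds 0) := by
  have hbound : ∀ u : ℝ, 1 ≤ u → u * Real.exp (-b * u ^ 2) ≤ (1 / b) * u⁻¹ := by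
    intro u hu
    have hu0 : 0 < u := lt_of_lt_of_le one_pos hu
    have h2 := Real.add_one_le_exp (b * u ^ 2)
    have h3 : b * u ^ 2 ≤ Real.exp (b * u ^ 2) := by linarith
    have hbu : 0 < b * u ^ 2 := by positivity
    rw [show -b * u ^ 2 = -(b * u ^ 2) by ring, Real.exp_neg]
    calc u * (Real.exp (b * u ^ 2))⁻¹ ≤ u * (b * u ^ 2)⁻¹ :=
          mul_le_mul_of_nonneg_left (inv_anti₀ hbu h3) hu0.le
      _ = (1 / b) * u⁻¹ := by field_simp
  have hlim : Filter.Tendsto (fun u : ℝ => (1 / b) * u⁻¹) Filter.atTop (nhds 0) := by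
    simpa using tendsto_inv_atTop_zero.const_mul (1 / b)
  refine tendsto_of_tendsto_of_tendsto_of_le_of_le' tendsto_const_nhds hlim ?_ ?_
  · filter_upwards [Filter.eventually_ge_atTop (0 : ℝ)] with u hu
    positivity
  · filter_upwards [Filter.eventually_ge_atTop (1 : ℝ)] with u hu
    exact hbound u hu

lemma tendsto_mul_exp_atBot {b : ℝ} (hb : 0 < b) :
    Filter.Tendsto (fun u : ℝ => u * Real.exp (-b * u ^ 2)) Filter.atBot (nhds 0) := by
  have h := (tendsto_mul_exp_atTop hb).comp Filter.tendsto_neg_atBot_atTop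
  have heq : ((fun u : ℝ => u * Real.exp (-b * u ^ 2)) ∘ fun u : ℝ => -u)
      = fun u : ℝ => -(u * Real.exp (-b * u ^ 2)) := by
    funext u
    simp only [Function.comp_apply, neg_sq]
    ring
  rw [heq] at h
  simpa using h.neg

lemma integral_sq_mul_exp {b : ℝ} (hb : 0 < b) :
    ∫ u : ℝ, u ^ 2 * Real.exp (-b * u ^ 2) = Real.sqrt (Real.pi / b) / (2 * b) := by
  set g : ℝ → ℝ := fun u => u * Real.exp (-b * u ^ 2) with hg
  set g' : ℝ → ℝ := fun u => Real.exp (-b * u ^ 2)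
    - 2 * b * (u ^ 2 * Real.exp (-b * u ^ 2)) with hg'
  have hderiv : ∀ u : ℝ, HasDerivAt g (g' u) u := by
    intro u
    have h1 : HasDerivAt (fun v : ℝ => -b * v ^ 2) (-b * (2 * u ^ 1)) u := by
      simpa using (hasDerivAt_pow 2 u).const_mul (-b)
    have h2 := h1.exp
    have h3 : HasDerivAt (fun v : ℝ => v * Real.exp (-b * v ^ 2))
        (1 * Real.exp (-b * u ^ 2) + u * (Real.exp (-b * u ^ 2) * (-b * (2 * u ^ 1)))) u :=
      (hasDerivAt_id u).mul h2
    convert h3 using 1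
    simp [hg', hg]
    ring
  have hint_exp : Integrable (fun u : ℝ => Real.exp (-b * u ^ 2)) :=
    integrable_exp_neg_mul_sq hb
  have hint_sq := integrable_sq_mul_exp hb
  have hint_g' : Integrable g' := hint_exp.sub (hint_sq.const_mul (2 * b))
  have hIoi : ∫ u in Ioi (0 : ℝ), g' u = 0 - g 0 :=
    integral_Ioi_of_hasDerivAt_of_tendsto' (fun u _ => hderiv u)
      hint_g'.integrableOn (tendsto_mul_exp_atTop hb)
  have hIic : ∫ u in Iic (0 : ℝ), g' u = g 0 - 0 :=
    integral_Iic_of_hasDerivAt_of_tendsto' (fun u _ => hderiv u)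
      hint_g'.integrableOn (tendsto_mul_exp_atBot hb)
  have htot : ∫ u : ℝ, g' u = 0 := by
    rw [← intervalIntegral.integral_Iic_add_Ioi hint_g'.integrableOn hint_g'.integrableOn, hIoi, hIic]
    ring
  have hsplit : ∫ u : ℝ, g' u
      = (∫ u : ℝ, Real.exp (-b * u ^ 2)) - 2 * b * ∫ u : ℝ, u ^ 2 * Real.exp (-b * u ^ 2) := by
    have e1 : ∫ u : ℝ, (Real.exp (-b * u ^ 2) - 2 * b * (u ^ 2 * Real.exp (-b * u ^ 2)))
        = (∫ u : ℝ, Real.exp (-b * u ^ 2))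
          - ∫ u : ℝ, 2 * b * (u ^ 2 * Real.exp (-b * u ^ 2)) :=
      integral_sub hint_exp (hint_sq.const_mul _)
    have e2 : ∫ u : ℝ, 2 * b * (u ^ 2 * Real.exp (-b * u ^ 2))
        = 2 * b * ∫ u : ℝ, u ^ 2 * Real.exp (-b * u ^ 2) := integral_const_mul _ _
    rw [hg', e1, e2]
  rw [htot, integral_gaussian] at hsplit
  have hb' : (2 : ℝ) * b ≠ 0 := by positivity
  field_simp at hsplit ⊢
  linarith

/-! ### Gaussian density moments -/

lemma gaussDens_eq {σ : ℝ} (hσ : 0 < σ) (u : ℝ) :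
    gaussDens σ u = (Real.sqrt (2 * Real.pi * σ ^ 2))⁻¹
      * Real.exp (-(2 * σ ^ 2)⁻¹ * u ^ 2) := by
  unfold gaussDens
  congr 1
  rw [div_eq_mul_inv]
  ring

lemma bpos {σ : ℝ} (hσ : 0 < σ) : 0 < (2 * σ ^ 2)⁻¹ := by positivity

lemma integrable_gaussDens {σ : ℝ} (hσ : 0 < σ) : Integrable (gaussDens σ) := by
  have h : Integrable (fun u : ℝ => (Real.sqrt (2 * Real.pi * σ ^ 2))⁻¹
      * Real.exp (-(2 * σ ^ 2)⁻¹ * u ^ 2)) :=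
    (integrable_exp_neg_mul_sq (bpos hσ)).const_mul _
  refine h.congr (ae_of_all _ fun u => ?_)
  simp only [gaussDens_eq hσ]

lemma integrable_id_gaussDens {σ : ℝ} (hσ : 0 < σ) :
    Integrable (fun u : ℝ => u * gaussDens σ u) := by
  have h : Integrable (fun u : ℝ => (Real.sqrt (2 * Real.pi * σ ^ 2))⁻¹
      * (u * Real.exp (-(2 * σ ^ 2)⁻¹ * u ^ 2))) :=
    (integrable_mul_exp_neg_mul_sq (bpos hσ)).const_mul _
  refine h.congr (ae_of_all _ fun u => ?_)
  simp only [gaussDens_eq hσ]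
  ring

lemma integrable_sq_gaussDens {σ : ℝ} (hσ : 0 < σ) :
    Integrable (fun u : ℝ => u ^ 2 * gaussDens σ u) := by
  have h : Integrable (fun u : ℝ => (Real.sqrt (2 * Real.pi * σ ^ 2))⁻¹
      * (u ^ 2 * Real.exp (-(2 * σ ^ 2)⁻¹ * u ^ 2))) :=
    (integrable_sq_mul_exp (bpos hσ)).const_mul _
  refine h.congr (ae_of_all _ fun u => ?_)
  simp only [gaussDens_eq hσ]
  ring

lemma sqrt_pi_div_b {σ : ℝ} (hσ : 0 < σ) :
    Real.sqrt (Real.pi / (2 * σ ^ 2)⁻¹) = Real.sqrt (2 * Real.pi * σ ^ 2) := by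
  congr 1
  field_simp

lemma integral_gaussDens {σ : ℝ} (hσ : 0 < σ) : ∫ u : ℝ, gaussDens σ u = 1 := by
  have h : ∫ u : ℝ, gaussDens σ u = (Real.sqrt (2 * Real.pi * σ ^ 2))⁻¹
      * ∫ u : ℝ, Real.exp (-(2 * σ ^ 2)⁻¹ * u ^ 2) := by
    rw [← integral_const_mul]
    exact integral_congr_ae (ae_of_all _ fun u => gaussDens_eq hσ u)
  rw [h, integral_gaussian, sqrt_pi_div_b hσ]
  have hpos : 0 < Real.sqrt (2 * Real.pi * σ ^ 2) := by
    have : 0 < 2 * Real.pi * σ ^ 2 := by positivity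
    positivity
  field_simp

lemma gaussDens_even {σ : ℝ} (u : ℝ) : gaussDens σ (-u) = gaussDens σ u := by
  unfold gaussDens
  rw [neg_sq]

lemma integral_id_gaussDens {σ : ℝ} (hσ : 0 < σ) : ∫ u : ℝ, u * gaussDens σ u = 0 := by
  have hneg := integral_neg_eq_self (fun v : ℝ => v * gaussDens σ v) (volume : Measure ℝ)
  have heq : (fun u : ℝ => -u * gaussDens σ (-u))
      = fun u : ℝ => -(u * gaussDens σ u) := by
    funext u
    rw [gaussDens_even]
    ring
  simp only [heq, integral_neg] at hneg
  linarith

lemma integral_sq_gaussDens {σ : ℝ} (hσ : 0 < σ) :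
    ∫ u : ℝ, u ^ 2 * gaussDens σ u = σ ^ 2 := by
  have h : ∫ u : ℝ, u ^ 2 * gaussDens σ u = (Real.sqrt (2 * Real.pi * σ ^ 2))⁻¹
      * ∫ u : ℝ, u ^ 2 * Real.exp (-(2 * σ ^ 2)⁻¹ * u ^ 2) := by
    rw [← integral_const_mul]
    refine integral_congr_ae (ae_of_all _ fun u => ?_)
    simp only [gaussDens_eq hσ]
    ring
  rw [h, integral_sq_mul_exp (bpos hσ), sqrt_pi_div_b hσ]
  have hpos : 0 < Real.sqrt (2 * Real.pi * σ ^ 2) := by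
    have : 0 < 2 * Real.pi * σ ^ 2 := by positivity
    positivity
  have hσ2 : σ ^ 2 ≠ 0 := by positivity
  field_simp

/-! ### Shifted Gaussian moments -/

lemma integrable_gauss_shift {σ : ℝ} (hσ : 0 < σ) (c : ℝ) :
    Integrable (fun x : ℝ => gaussDens σ (x - c)) :=
  (integrable_gaussDens hσ).comp_sub_right c

lemma integral_gauss_shift {σ : ℝ} (hσ : 0 < σ) (c : ℝ) :
    ∫ x : ℝ, gaussDens σ (x - c) = 1 := by
  rw [integral_sub_right_eq_self (gaussDens σ) c]
  exact integral_gaussDens hσ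

lemma integrable_base_shift {σ : ℝ} (hσ : 0 < σ) (c : ℝ) :
    Integrable (fun u : ℝ => (u + c) ^ 2 * gaussDens σ u) := by
  have heq : (fun u : ℝ => (u + c) ^ 2 * gaussDens σ u)
      = fun u : ℝ => (u ^ 2 * gaussDens σ u + (2 * c) * (u * gaussDens σ u))
        + c ^ 2 * gaussDens σ u := by
    funext u; ring
  rw [heq]
  exact ((integrable_sq_gaussDens hσ).add
    ((integrable_id_gaussDens hσ).const_mul _)).add ((integrable_gaussDens hσ).const_mul _)

lemma integrable_sq_gauss_shift {σ : ℝ} (hσ : 0 < σ) (c : ℝ) :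
    Integrable (fun x : ℝ => x ^ 2 * gaussDens σ (x - c)) := by
  have h := (integrable_base_shift hσ c).comp_sub_right c
  refine h.congr (ae_of_all _ fun x => ?_)
  simp only [sub_add_cancel]

lemma integral_sq_gauss_shift {σ : ℝ} (hσ : 0 < σ) (c : ℝ) :
    ∫ x : ℝ, x ^ 2 * gaussDens σ (x - c) = σ ^ 2 + c ^ 2 := by
  have heq : (fun x : ℝ => x ^ 2 * gaussDens σ (x - c))
      = fun x : ℝ => (fun u : ℝ => (u + c) ^ 2 * gaussDens σ u) (x - c) := by
    funext x
    simp only [sub_add_cancel]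
  rw [heq, integral_sub_right_eq_self (fun u : ℝ => (u + c) ^ 2 * gaussDens σ u) c]
  have heq2 : (fun u : ℝ => (u + c) ^ 2 * gaussDens σ u)
      = fun u : ℝ => (u ^ 2 * gaussDens σ u + (2 * c) * (u * gaussDens σ u))
        + c ^ 2 * gaussDens σ u := by
    funext u; ring
  have e1 : ∫ u : ℝ, ((u ^ 2 * gaussDens σ u + (2 * c) * (u * gaussDens σ u))
        + c ^ 2 * gaussDens σ u)
      = (∫ u : ℝ, (u ^ 2 * gaussDens σ u + (2 * c) * (u * gaussDens σ u)))
        + ∫ u : ℝ, c ^ 2 * gaussDens σ u :=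
    integral_add ((integrable_sq_gaussDens hσ).add
      ((integrable_id_gaussDens hσ).const_mul _)) ((integrable_gaussDens hσ).const_mul _)
  have e2 : ∫ u : ℝ, (u ^ 2 * gaussDens σ u + (2 * c) * (u * gaussDens σ u))
      = (∫ u : ℝ, u ^ 2 * gaussDens σ u) + ∫ u : ℝ, (2 * c) * (u * gaussDens σ u) :=
    integral_add (integrable_sq_gaussDens hσ) ((integrable_id_gaussDens hσ).const_mul _)
  have e3 : ∫ u : ℝ, (2 * c) * (u * gaussDens σ u)
      = (2 * c) * ∫ u : ℝ, u * gaussDens σ u := integral_const_mul _ _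
  have e4 : ∫ u : ℝ, c ^ 2 * gaussDens σ u
      = c ^ 2 * ∫ u : ℝ, gaussDens σ u := integral_const_mul _ _
  rw [heq2, e1, e2, e3, e4, integral_sq_gaussDens hσ,
    integral_id_gaussDens hσ, integral_gaussDens hσ]
  ring

end Stmt2Aux

open Stmt2Aux in
/-- `∫∫ m_{G1,σ}(x)² φ_σ(x-θ) dx dG0(θ) ≤ 6V + 4σ²`. -/
theorem stmt_2 (V σ : ℝ) (hσ : 0 < σ) (G0 G1 : Measure ℝ)
    [IsProbabilityMeasure G0] [IsProbabilityMeasure G1]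
    (hG0 : MeanZeroVarLe G0 V) (hG1 : MeanZeroVarLe G1 V) :
    (∫ θ, (∫ x, (postMean G1 σ x) ^ 2 * gaussDens σ (x - θ)) ∂G0)
      ≤ 6 * V + 4 * σ ^ 2 := by
  obtain ⟨hInt1, hInt2, hMean, hVar⟩ := hG0
  have hVnn : 0 ≤ V := le_trans (integral_nonneg fun θ => sq_nonneg θ) hVar
  have key : ∀ x : ℝ, (postMean G1 σ x) ^ 2 ≤ 4 * x ^ 2 + 2 * V :=
    postMean_sq_le V σ hσ G1 hG1
  have inner_le : ∀ θ0 : ℝ,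
      (∫ x, (postMean G1 σ x) ^ 2 * gaussDens σ (x - θ0)) ≤ 4 * θ0 ^ 2 + 4 * σ ^ 2 + 2 * V := by
    intro θ0
    have hRHSint : Integrable (fun x : ℝ => (4 * x ^ 2 + 2 * V) * gaussDens σ (x - θ0)) := by
      have heq : (fun x : ℝ => (4 * x ^ 2 + 2 * V) * gaussDens σ (x - θ0))
          = fun x : ℝ => 4 * (x ^ 2 * gaussDens σ (x - θ0))
            + (2 * V) * gaussDens σ (x - θ0) := by
        funext x; ring
      rw [heq]
      exact ((integrable_sq_gauss_shift hσ θ0).const_mul 4).add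
        ((integrable_gauss_shift hσ θ0).const_mul (2 * V))
    have h1 : (∫ x, (postMean G1 σ x) ^ 2 * gaussDens σ (x - θ0))
        ≤ ∫ x, (4 * x ^ 2 + 2 * V) * gaussDens σ (x - θ0) := by
      refine integral_mono_of_nonneg (ae_of_all _ fun x =>
        mul_nonneg (sq_nonneg _) (gaussDens_pos hσ _).le) hRHSint
        (ae_of_all _ fun x => ?_)
      exact mul_le_mul_of_nonneg_right (key x) (gaussDens_pos hσ _).le
    have h2 : ∫ x, (4 * x ^ 2 + 2 * V) * gaussDens σ (x - θ0)
        = 4 * θ0 ^ 2 + 4 * σ ^ 2 + 2 * V := by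
      have heq : (fun x : ℝ => (4 * x ^ 2 + 2 * V) * gaussDens σ (x - θ0))
          = fun x : ℝ => 4 * (x ^ 2 * gaussDens σ (x - θ0))
            + (2 * V) * gaussDens σ (x - θ0) := by
        funext x; ring
      have e1 : ∫ x : ℝ, (4 * (x ^ 2 * gaussDens σ (x - θ0))
            + (2 * V) * gaussDens σ (x - θ0))
          = (∫ x : ℝ, 4 * (x ^ 2 * gaussDens σ (x - θ0)))
            + ∫ x : ℝ, (2 * V) * gaussDens σ (x - θ0) :=
        integral_add ((integrable_sq_gauss_shift hσ θ0).const_mul 4)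
          ((integrable_gauss_shift hσ θ0).const_mul (2 * V))
      have e2 : ∫ x : ℝ, 4 * (x ^ 2 * gaussDens σ (x - θ0))
          = 4 * ∫ x : ℝ, x ^ 2 * gaussDens σ (x - θ0) := integral_const_mul _ _
      have e3 : ∫ x : ℝ, (2 * V) * gaussDens σ (x - θ0)
          = (2 * V) * ∫ x : ℝ, gaussDens σ (x - θ0) := integral_const_mul _ _
      rw [heq, e1, e2, e3, integral_sq_gauss_shift hσ θ0, integral_gauss_shift hσ θ0]
      ring
    linarith
  have houter : (∫ θ, (∫ x, (postMean G1 σ x) ^ 2 * gaussDens σ (x - θ)) ∂G0)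
      ≤ ∫ θ, (4 * θ ^ 2 + (4 * σ ^ 2 + 2 * V)) ∂G0 := by
    refine integral_mono_of_nonneg (ae_of_all _ fun θ0 => ?_) ?_ (ae_of_all _ fun θ0 => ?_)
    · exact integral_nonneg fun x => mul_nonneg (sq_nonneg _) (gaussDens_pos hσ _).le
    · exact (hInt2.const_mul 4).add (integrable_const _)
    · simp only []
      linarith [inner_le θ0]
  have hval : ∫ θ, (4 * θ ^ 2 + (4 * σ ^ 2 + 2 * V)) ∂G0
      = 4 * (∫ θ, θ ^ 2 ∂G0) + (4 * σ ^ 2 + 2 * V) := by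
    have e1 : ∫ θ, (4 * θ ^ 2 + (4 * σ ^ 2 + 2 * V)) ∂G0
        = (∫ θ, 4 * θ ^ 2 ∂G0) + ∫ _θ, (4 * σ ^ 2 + 2 * V) ∂G0 :=
      integral_add (hInt2.const_mul 4) (integrable_const _)
    have e2 : ∫ θ, 4 * θ ^ 2 ∂G0 = 4 * ∫ θ, θ ^ 2 ∂G0 := integral_const_mul _ _
    rw [e1, e2, integral_const]
    simp
  rw [hval] at houter
  have : 4 * (∫ θ, θ ^ 2 ∂G0) ≤ 4 * V := by linarith
  linarith
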